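/- If Lab is a complete labelling of Γ, then the set {a : Lab(a) = in} is a complete extension of Γ. -/

import Mathlib

variable {α : Type*}

inductive Label | IN | OUT | UNDEC
deriving DecidableEq

def conflictFree (att : α → α → Prop) (T : Set α) : Prop :=
  ∀ a ∈ T, ∀ b ∈ T, ¬ att a b

def acceptable (att : α → α → Prop) (T : Set α) (a : α) : Prop :=
  ∀ b, att b a → ∃ c ∈ T, att c b

def admissible (att : α → α → Prop) (T : Set α) : Prop :=
  conflictFree att T ∧ ∀ a ∈ T, acceptable att T a

def complete (att : α → α → Prop) (T : Set α) : Prop :=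
  admissible att T ∧ ∀ a, acceptable att T a → a ∈ T

def completeLab (att : α → α → Prop) (Lab : α → Label) : Prop :=
  (∀ a, Lab a = Label.IN ↔ ∀ b, att b a → Lab b = Label.OUT) ∧
  (∀ a, Lab a = Label.OUT ↔ ∃ b, att b a ∧ Lab b = Label.IN)

namespace completeLab

variable {att : α → α → Prop} {Lab : α → Label}

theorem conflictFree_inSet (h : completeLab att Lab) :
    conflictFree att {a | Lab a = Label.IN} :=
  fun a ha b hb hab => Label.noConfusion (((h.1 b).mp hb a hab).symm.trans ha)

theorem acceptable_inSet {a : α} (h : completeLab att Lab) (ha : Lab a = Label.IN) :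
    acceptable att {a | Lab a = Label.IN} a := by
  intro b hba
  obtain ⟨c, hcb, hc⟩ := (h.2 b).mp ((h.1 a).mp ha b hba)
  exact ⟨c, hc, hcb⟩

theorem in_of_acceptable_inSet {a : α} (h : completeLab att Lab)
    (ha : acceptable att {a | Lab a = Label.IN} a) : Lab a = Label.IN :=
  (h.1 a).mpr fun b hba =>
    let ⟨c, hc, hcb⟩ := ha b hba
    (h.2 b).mpr ⟨c, hcb, hc⟩

end completeLab

theorem inSet_of_completeLab (att : α → α → Prop) (Lab : α → Label)
    (h : completeLab att Lab) :
    complete att {a | Lab a = Label.IN} :=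
  ⟨⟨h.conflictFree_inSet, fun _ ha => h.acceptable_inSet ha⟩,
    fun _ ha => h.in_of_acceptable_inSet ha⟩
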